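/- Let k be a field and L ⊆ ℤ⁴ the subgroup generated by (1,1,0,−1) and (0,1,1,−1). Then the Lawrence ideal J_L ⊆ S = k[x₁,x₂,x₃,x₄,y₁,y₂,y₃,y₄] equals the ideal generated by x₁x₂y₄ − x₄y₁y₂, x₂x₃y₄ − x₄y₂y₃, and x₁y₃ − x₃y₁. -/

import Mathlib

/-!
STATEMENT 7: for `L = ⟨(1,1,0,−1), (0,1,1,−1)⟩ ⊆ ℤ⁴` (principal divisors of `Bl_p ℙ²`
with rays `(1,0), (1,1), (0,1), (−1,−1)`), the Lawrence ideal `J_L` equals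
`⟨x₁x₂y₄ − x₄y₁y₂, x₂x₃y₄ − x₄y₂y₃, x₁y₃ − x₃y₁⟩`.
-/

noncomputable section

open MvPolynomial

/-- The polynomial ring `S = k[x₁,…,x₄,y₁,…,y₄]`; `Sum.inl i ↦ xᵢ₊₁`, `Sum.inr i ↦ yᵢ₊₁`. -/
abbrev PolyS (k : Type*) [Field k] := MvPolynomial (Fin 4 ⊕ Fin 4) k

/-- `xᵢ₊₁` (0-indexed). -/
def xv (k : Type*) [Field k] (i : Fin 4) : PolyS k := X (Sum.inl i)

/-- `yᵢ₊₁` (0-indexed). -/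
def yv (k : Type*) [Field k] (i : Fin 4) : PolyS k := X (Sum.inr i)

/-- The monomial `x^a y^b ∈ S`. -/
def xymon (k : Type*) [Field k] (a b : Fin 4 → ℕ) : PolyS k :=
  (∏ i, xv k i ^ a i) * ∏ i, yv k i ^ b i

/-- The Lawrence ideal `J_L = ⟨x^a y^b - x^b y^a : a - b ∈ L⟩ ⊆ S`. -/
def lawrenceIdeal (k : Type*) [Field k] (L : AddSubgroup (Fin 4 → ℤ)) :
    Ideal (PolyS k) :=
  Ideal.span { f | ∃ a b : Fin 4 → ℕ,
    ((fun i => (a i : ℤ)) - (fun i => (b i : ℤ))) ∈ L ∧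
    f = xymon k a b - xymon k b a }


/-! Write `a - b = m (1,1,0,-1) + n (0,1,1,-1)`. The monomial `x^a y^b` is joined to `x^b y^a` by
moves along the three quadrics: whichever of the cones `m, m + n > 0`, `n, m + n > 0`, `m > 0 > n`
(or their negatives) contains `(m, n)`, the first monomial of the matching quadric (or of its
negative) divides `x^a y^b`, and applying it lowers `|m| + |n|`. Only the source monomial moves,
so the induction runs over pairs `x^a y^b`, `x^c y^d` with `(a, b) - (c, d) = (v, -v)`, `v ∈ L`. -/

section

variable {k : Type*} [Field k]

lemma xymon_add (a b c d : Fin 4 → ℕ) :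
    xymon k (a + c) (b + d) = xymon k a b * xymon k c d := by
  simp only [xymon, Pi.add_apply, pow_add, Finset.prod_mul_distrib]
  ring

/-- The divisor of the character `χ^(m,n)`: its coefficients are `⟨ρ, (m, n)⟩` over the rays. -/
def principalDivisor (m n : ℤ) : Fin 4 → ℤ := ![m, m + n, n, -m - n]

def lawrenceBinomial (a b : Fin 4 → ℕ) : PolyS k := xymon k a b - xymon k b a

/-- `x^a y^b ≡ x^c y^d (mod I)` whenever `(a, b) - (c, d) = (v, -v)`. -/
def LawrenceBinomialsMem (I : Ideal (PolyS k)) (v : Fin 4 → ℤ) : Prop :=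
  ∀ a b c d : Fin 4 → ℕ, (∀ i, (a i : ℤ) - c i = v i) →
    (∀ i, (d i : ℤ) - b i = v i) →
    xymon k a b - xymon k c d ∈ I

namespace LawrenceBinomialsMem

variable {I : Ideal (PolyS k)} {v : Fin 4 → ℤ}

lemma zero (I : Ideal (PolyS k)) : LawrenceBinomialsMem I 0 := by
  intro a b c d hac hdb
  obtain rfl : a = c := funext fun i => by simpa [sub_eq_zero] using hac i
  obtain rfl : b = d := funext fun i => by simpa [sub_eq_zero, eq_comm] using hdb i
  simp

lemma neg (h : LawrenceBinomialsMem I v) : LawrenceBinomialsMem I (-v) := by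
  intro a b c d hac hdb
  rw [← neg_sub]
  refine I.neg_mem_iff.mpr <| h c d a b (fun i => ?_) (fun i => ?_)
  · linarith [hac i, Pi.neg_apply v i]
  · linarith [hdb i, Pi.neg_apply v i]

/-- `he` and `hf` make `x^e y^f` divide every `x^a y^b` in question, so that `x^e y^f - x^f y^e`
moves it to `x^(a - e + f) y^(b - f + e)`. -/
lemma of_move {e f : Fin 4 → ℕ} {w : Fin 4 → ℤ} (hmove : lawrenceBinomial e f ∈ I)
    (hv : ∀ i, v i = w i + e i - f i) (he : ∀ i, e i ≤ (v i).toNat)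
    (hf : ∀ i, f i ≤ (-v i).toNat)
    (h : LawrenceBinomialsMem I w) : LawrenceBinomialsMem I v := by
  intro a b c d hac hdb
  have hea : e ≤ a := fun i => show e i ≤ a i by have := hac i; have := he i; omega
  have hfb : f ≤ b := fun i => show f i ≤ b i by have := hdb i; have := hf i; omega
  obtain ⟨a, rfl⟩ : ∃ a', a = a' + e := ⟨a - e, (tsub_add_cancel_of_le hea).symm⟩
  obtain ⟨b, rfl⟩ : ∃ b', b = b' + f := ⟨b - f, (tsub_add_cancel_of_le hfb).symm⟩
  have hsplit : xymon k (a + e) (b + f) - xymon k c d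
      = xymon k a b * lawrenceBinomial e f + (xymon k (a + f) (b + e) - xymon k c d) := by
    simp only [lawrenceBinomial, xymon_add]; ring
  rw [hsplit]
  refine add_mem (I.mul_mem_left _ hmove) (h _ _ _ _ (fun i => ?_) (fun i => ?_))
  · have := hac i; have := hv i; simp only [Pi.add_apply, Nat.cast_add] at *; omega
  · have := hdb i; have := hv i; simp only [Pi.add_apply, Nat.cast_add] at *; omega

lemma principalDivisor_of_neg {m n : ℤ}
    (h : LawrenceBinomialsMem I (principalDivisor (-m) (-n))) :
    LawrenceBinomialsMem I (principalDivisor m n) := by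
  have hneg : -principalDivisor (-m) (-n) = principalDivisor m n := by
    ext i; fin_cases i <;> simp [principalDivisor] <;> ring
  exact hneg ▸ h.neg

end LawrenceBinomialsMem

lemma mem_closure_iff_exists_principalDivisor {v : Fin 4 → ℤ} :
    v ∈ AddSubgroup.closure {![1, 1, 0, -1], ![0, 1, 1, -1]} ↔
      ∃ m n, principalDivisor m n = v := by
  rw [AddSubgroup.mem_closure_pair]
  refine exists₂_congr fun m n => Eq.congr_left ?_
  ext i; fin_cases i <;> simp [principalDivisor]; ring

variable (k) in
def quadricIdeal : Ideal (PolyS k) :=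
  Ideal.span {lawrenceBinomial ![1, 1, 0, 0] ![0, 0, 0, 1],
    lawrenceBinomial ![0, 1, 1, 0] ![0, 0, 0, 1], lawrenceBinomial ![1, 0, 0, 0] ![0, 0, 1, 0]}

lemma quadricIdeal_eq : quadricIdeal k = Ideal.span
    { xv k 0 * xv k 1 * yv k 3 - xv k 3 * yv k 0 * yv k 1,
      xv k 1 * xv k 2 * yv k 3 - xv k 3 * yv k 1 * yv k 2,
      xv k 0 * yv k 2 - xv k 2 * yv k 0 } := by
  simp [quadricIdeal, lawrenceBinomial, xymon, Fin.prod_univ_four, mul_assoc]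

lemma quadricIdeal_le_lawrenceIdeal :
    quadricIdeal k ≤ lawrenceIdeal k (AddSubgroup.closure {![1, 1, 0, -1], ![0, 1, 1, -1]}) := by
  refine Ideal.span_le.mpr ?_
  rintro _ (rfl | rfl | rfl) <;> refine Ideal.subset_span ⟨_, _, ?_, rfl⟩ <;>
    rw [mem_closure_iff_exists_principalDivisor]
  exacts [⟨1, 0, by ext i; fin_cases i <;> rfl⟩, ⟨0, 1, by ext i; fin_cases i <;> rfl⟩,
    ⟨1, -1, by ext i; fin_cases i <;> rfl⟩]

namespace LawrenceBinomialsMem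

variable {m n : ℤ}

lemma principalDivisor_of_pred_left (hm : 0 < m) (hmn : 0 < m + n)
    (h : LawrenceBinomialsMem (quadricIdeal k) (principalDivisor (m - 1) n)) :
    LawrenceBinomialsMem (quadricIdeal k) (principalDivisor m n) := by
  refine of_move (e := ![1, 1, 0, 0]) (f := ![0, 0, 0, 1]) (Ideal.subset_span (by simp))
    ?_ ?_ ?_ h <;> intro i <;> fin_cases i <;> simp [principalDivisor] <;> omega

lemma principalDivisor_of_pred_right (hn : 0 < n) (hmn : 0 < m + n)
    (h : LawrenceBinomialsMem (quadricIdeal k) (principalDivisor m (n - 1))) :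
    LawrenceBinomialsMem (quadricIdeal k) (principalDivisor m n) := by
  refine of_move (e := ![0, 1, 1, 0]) (f := ![0, 0, 0, 1]) (Ideal.subset_span (by simp))
    ?_ ?_ ?_ h <;> intro i <;> fin_cases i <;> simp [principalDivisor] <;> omega

lemma principalDivisor_of_pred_left_succ_right (hm : 0 < m) (hn : n < 0)
    (h : LawrenceBinomialsMem (quadricIdeal k) (principalDivisor (m - 1) (n + 1))) :
    LawrenceBinomialsMem (quadricIdeal k) (principalDivisor m n) := by
  refine of_move (e := ![1, 0, 0, 0]) (f := ![0, 0, 1, 0]) (Ideal.subset_span (by simp))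
    ?_ ?_ ?_ h <;> intro i <;> fin_cases i <;> simp [principalDivisor] <;> omega

lemma principalDivisor_quadricIdeal (m n : ℤ) :
    LawrenceBinomialsMem (quadricIdeal k) (principalDivisor m n) := by
  induction hN : m.natAbs + n.natAbs using Nat.strong_induction_on generalizing m n with
  | _ N ih =>
  have hcones : ∀ m n : ℤ, m.natAbs + n.natAbs = N →
      (0 < m ∧ 0 < m + n) ∨ (0 < n ∧ 0 < m + n) ∨ (0 < m ∧ n < 0) →
      LawrenceBinomialsMem (quadricIdeal k) (principalDivisor m n) := by
    rintro m n hN (⟨hm, hmn⟩ | ⟨hn, hmn⟩ | ⟨hm, hn⟩)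
    · exact principalDivisor_of_pred_left hm hmn (ih _ (by omega) _ _ rfl)
    · exact principalDivisor_of_pred_right hn hmn (ih _ (by omega) _ _ rfl)
    · exact principalDivisor_of_pred_left_succ_right hm hn (ih _ (by omega) _ _ rfl)
  by_cases h0 : m = 0 ∧ n = 0
  · obtain ⟨rfl, rfl⟩ := h0
    convert zero (quadricIdeal k)
    ext i; fin_cases i <;> rfl
  by_cases hcone : (0 < m ∧ 0 < m + n) ∨ (0 < n ∧ 0 < m + n) ∨ (0 < m ∧ n < 0)
  · exact hcones m n hN hcone
  · exact principalDivisor_of_neg (hcones (-m) (-n) (by omega) (by omega))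

end LawrenceBinomialsMem

lemma lawrenceIdeal_le_quadricIdeal :
    lawrenceIdeal k (AddSubgroup.closure {![1, 1, 0, -1], ![0, 1, 1, -1]}) ≤ quadricIdeal k := by
  refine Ideal.span_le.mpr ?_
  rintro _ ⟨a, b, hab, rfl⟩
  obtain ⟨m, n, hmn⟩ := mem_closure_iff_exists_principalDivisor.mp hab
  have hcoord (i : Fin 4) : (a i : ℤ) - b i = principalDivisor m n i := by rw [hmn]; rfl
  exact LawrenceBinomialsMem.principalDivisor_quadricIdeal m n a b b a hcoord hcoord

end

theorem lawrenceIdeal_blowup_P2' (k : Type*) [Field k] :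
    lawrenceIdeal k (AddSubgroup.closure {![1, 1, 0, -1], ![0, 1, 1, -1]})
      = Ideal.span
          { xv k 0 * xv k 1 * yv k 3 - xv k 3 * yv k 0 * yv k 1,
            xv k 1 * xv k 2 * yv k 3 - xv k 3 * yv k 1 * yv k 2,
            xv k 0 * yv k 2 - xv k 2 * yv k 0 } := by
  rw [← quadricIdeal_eq]
  exact le_antisymm lawrenceIdeal_le_quadricIdeal quadricIdeal_le_lawrenceIdeal

end
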